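/- arXiv:1809.01839 — 8 statements merged into one kernel-verified Lean document; each statement's English description precedes it below -/
import Mathlib

section
/- Let Ω ⊆ ℝ^d be a measurable set of finite measure, ε > 0, and let u, v : ℝ^d → ℝ be differentiable functions such that the integrands defining E(u), E(v), E_Q(u;v) and E_Q(v;v) are integrable on Ω. Suppose |u| ≤ 1 and |v| ≤ 1 almost everywhere on Ω, and suppose u minimizes E_Q(·;v) over K, i.e. for every differentiable w : ℝ^d → ℝ with |w| ≤ 1 a.e. on Ω and with integrable integrand, E_Q(u;v) ≤ E_Q(w;v). Then E(u) ≤ E(v). -/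
open MeasureTheory

/-- linearization of the double-well factor `p(s) = (1/2)(s²−1)` at `t`. -/
noncomputable def pL (s t : ℝ) : ℝ := t * s - (1/2) * t^2 - 1/2

/-- integrand of the double-well energy `E`. -/
noncomputable def Eint {d : ℕ} (ε : ℝ) (u : EuclideanSpace ℝ (Fin d) → ℝ)
    (x : EuclideanSpace ℝ (Fin d)) : ℝ :=
  (1/2) * ‖gradient u x‖^2 + (1/ε^2) * ((1/4) * (u x ^ 2 - 1)^2)

/-- the double-well energy `E(u) = ∫_Ω (1/2)|∇u|² + (1/ε²)F(u)`. -/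
noncomputable def E {d : ℕ} (Ω : Set (EuclideanSpace ℝ (Fin d))) (ε : ℝ)
    (u : EuclideanSpace ℝ (Fin d) → ℝ) : ℝ :=
  ∫ x in Ω, Eint ε u x

/-- integrand of the quadratic approximate energy `E_Q(·;v)`. -/
noncomputable def EQint {d : ℕ} (ε : ℝ) (u v : EuclideanSpace ℝ (Fin d) → ℝ)
    (x : EuclideanSpace ℝ (Fin d)) : ℝ :=
  (1/2) * ‖gradient u x‖^2 + (1/ε^2) * (pL (u x) (v x))^2

/-- the quadratic approximate energy `E_Q(u;v)`. -/
noncomputable def EQ {d : ℕ} (Ω : Set (EuclideanSpace ℝ (Fin d))) (ε : ℝ)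
    (u v : EuclideanSpace ℝ (Fin d) → ℝ) : ℝ :=
  ∫ x in Ω, EQint ε u v x

/-- Theorem 3.1, energy stability of one step of Algorithm 1:
if `|u| ≤ 1` and `|v| ≤ 1` a.e. on `Ω` and `u` minimizes `E_Q(·;v)` over
`K = {w : |w| ≤ 1 a.e. on Ω}`, then `E(u) ≤ E(v)`. -/
theorem energy_stable_step {d : ℕ} (Ω : Set (EuclideanSpace ℝ (Fin d)))
    (hΩ : MeasurableSet Ω) (hfin : volume Ω < ⊤)
    (ε : ℝ) (hε : 0 < ε) (u v : EuclideanSpace ℝ (Fin d) → ℝ)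
    (hu : Differentiable ℝ u) (hv : Differentiable ℝ v)
    (hEu : IntegrableOn (Eint ε u) Ω) (hEv : IntegrableOn (Eint ε v) Ω)
    (hEQuv : IntegrableOn (EQint ε u v) Ω) (hEQvv : IntegrableOn (EQint ε v v) Ω)
    (hub : ∀ᵐ x ∂(volume.restrict Ω), |u x| ≤ 1)
    (hvb : ∀ᵐ x ∂(volume.restrict Ω), |v x| ≤ 1)
    (hmin : ∀ w : EuclideanSpace ℝ (Fin d) → ℝ, Differentiable ℝ w →
      (∀ᵐ x ∂(volume.restrict Ω), |w x| ≤ 1) → IntegrableOn (EQint ε w v) Ω →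
      EQ Ω ε u v ≤ EQ Ω ε w v) :
    E Ω ε u ≤ E Ω ε v := by
  have key : ∀ s t : ℝ, |s| ≤ 1 → (1/4) * (s^2 - 1)^2 ≤ (pL s t)^2 := by
    intro s t hs
    have h1 : s^2 ≤ 1 := by nlinarith [abs_nonneg s, sq_abs s]
    unfold pL
    nlinarith [sq_nonneg (s - t), sq_nonneg (s*t - 1)]
  have h1 : E Ω ε u ≤ EQ Ω ε u v := by
    apply integral_mono_ae hEu hEQuv
    filter_upwards [hub] with x hx
    unfold Eint EQint
    have hε2 : (0:ℝ) ≤ 1/ε^2 := by positivity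
    have := key (u x) (v x) hx
    nlinarith
  have h2 : EQ Ω ε u v ≤ EQ Ω ε v v := hmin v hv hvb hEQvv
  have h3 : EQ Ω ε v v = E Ω ε v := by
    unfold EQ E
    congr 1
    funext x
    unfold EQint Eint pL
    ring
  linarith
end

section
/- Let Ω ⊆ ℝ^d be a measurable set of finite measure and ε > 0. Let (u_n)_{n≥0} be a sequence of differentiable functions ℝ^d → ℝ such that for every n the integrands of E(u_n) and E_Q(u_n; u_{n−1}) are integrable on Ω, |u_n| ≤ 1 a.e. on Ω, and for every n ≥ 1, u_n minimizes E_Q(·; u_{n−1}) over K (i.e. E_Q(u_n; u_{n−1}) ≤ E_Q(w; u_{n−1}) for every differentiable w with |w| ≤ 1 a.e. on Ω and integrable integrand). Then the sequence of energies is nonincreasing: E(u_n) ≤ E(u_{n−1}) for all n ≥ 1, and hence E(u_n) ≤ E(u_0) for all n. -/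
open MeasureTheory

/-- energy stability of Algorithm 1: if each `u_{n+1}` minimizes
`E_Q(·;u_n)` over `K = {w : |w| ≤ 1 a.e. on Ω}`, then the energies are
nonincreasing: `E(u_{n+1}) ≤ E(u_n)` for all `n`, and hence `E(u_n) ≤ E(u_0)`. -/
theorem energy_nonincreasing {d : ℕ} (Ω : Set (EuclideanSpace ℝ (Fin d)))
    (hΩ : MeasurableSet Ω) (hfin : volume Ω < ⊤)
    (ε : ℝ) (hε : 0 < ε) (u : ℕ → EuclideanSpace ℝ (Fin d) → ℝ)
    (hu : ∀ n, Differentiable ℝ (u n))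
    (hE : ∀ n, IntegrableOn (Eint ε (u n)) Ω)
    (hEQ : ∀ n, IntegrableOn (EQint ε (u (n+1)) (u n)) Ω)
    (hb : ∀ n, ∀ᵐ x ∂(volume.restrict Ω), |u n x| ≤ 1)
    (hmin : ∀ n, ∀ w : EuclideanSpace ℝ (Fin d) → ℝ, Differentiable ℝ w →
      (∀ᵐ x ∂(volume.restrict Ω), |w x| ≤ 1) → IntegrableOn (EQint ε w (u n)) Ω →
      EQ Ω ε (u (n+1)) (u n) ≤ EQ Ω ε w (u n)) :
    (∀ n : ℕ, E Ω ε (u (n+1)) ≤ E Ω ε (u n)) ∧ (∀ n : ℕ, E Ω ε (u n) ≤ E Ω ε (u 0)) := by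
  have hself : ∀ n, EQint ε (u n) (u n) = Eint ε (u n) := by
    intro n
    funext x
    simp only [EQint, Eint, pL]
    ring
  have step : ∀ n : ℕ, E Ω ε (u (n+1)) ≤ E Ω ε (u n) := by
    intro n
    have h1 : E Ω ε (u (n+1)) ≤ EQ Ω ε (u (n+1)) (u n) := by
      apply integral_mono_ae (hE (n+1)) (hEQ n)
      filter_upwards [hb (n+1)] with x hx
      simp only [Eint, EQint, pL]
      have hs : (u (n+1) x)^2 ≤ 1 := by
        have := abs_le.mp hx
        nlinarith
      gcongr _ + ?_
      have hε2 : (0:ℝ) ≤ 1/ε^2 := by positivity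
      apply mul_le_mul_of_nonneg_left _ hε2
      nlinarith [sq_nonneg (u (n+1) x - u n x), sq_nonneg (u n x * u (n+1) x - 1)]
    have h2 : EQ Ω ε (u (n+1)) (u n) ≤ EQ Ω ε (u n) (u n) := by
      apply hmin n (u n) (hu n) (hb n)
      rw [hself n]
      exact hE n
    have h3 : EQ Ω ε (u n) (u n) = E Ω ε (u n) := by
      simp only [EQ, E, hself n]
    linarith
  refine ⟨step, fun n => ?_⟩
  induction n with
  | zero => exact le_refl _
  | succ m ih => exact le_trans (step m) ih
end

section
/- Let Ω ⊆ ℝ^d be a measurable set of finite measure, ε > 0, and k > 0 arbitrary (no constraint relating k and ε). Let u, v : ℝ^d → ℝ be differentiable functions such that the integrands defining E(u), E(v), J_Q(u;v) and J_Q(v;v) are integrable on Ω. Suppose |u| ≤ 1 and |v| ≤ 1 almost everywhere on Ω, and suppose u minimizes J_Q(·;v) over K, i.e. for every differentiable w : ℝ^d → ℝ with |w| ≤ 1 a.e. on Ω and integrable integrand, J_Q(u;v) ≤ J_Q(w;v). Then E(u) ≤ E(v). (Unconditional energy stability of the constrained first-order IEQ scheme for the Allen–Cahn equation.) -/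
open MeasureTheory

/-- integrand of the time-discrete quadratic functional `J_Q(·;v)` with time step `k`. -/
noncomputable def JQint {d : ℕ} (ε k : ℝ) (u v : EuclideanSpace ℝ (Fin d) → ℝ)
    (x : EuclideanSpace ℝ (Fin d)) : ℝ :=
  (1/2) * ‖gradient u x‖^2 + (1/(2*k)) * (u x - v x)^2 + (1/ε^2) * (pL (u x) (v x))^2

/-- the time-discrete quadratic functional `J_Q(u;v)`. -/
noncomputable def JQ {d : ℕ} (Ω : Set (EuclideanSpace ℝ (Fin d))) (ε k : ℝ)
    (u v : EuclideanSpace ℝ (Fin d) → ℝ) : ℝ :=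
  ∫ x in Ω, JQint ε k u v x

/-- Theorem 4.2, unconditional energy stability of the constrained
first-order IEQ scheme: for any time step `k > 0`, if `|u| ≤ 1` and `|v| ≤ 1`
a.e. on `Ω` and `u` minimizes `J_Q(·;v)` over `K`, then `E(u) ≤ E(v)`. -/
theorem IEQ_unconditionally_energy_stable {d : ℕ} (Ω : Set (EuclideanSpace ℝ (Fin d)))
    (hΩ : MeasurableSet Ω) (hfin : volume Ω < ⊤)
    (ε k : ℝ) (hε : 0 < ε) (hk : 0 < k) (u v : EuclideanSpace ℝ (Fin d) → ℝ)
    (hu : Differentiable ℝ u) (hv : Differentiable ℝ v)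
    (hEu : IntegrableOn (Eint ε u) Ω) (hEv : IntegrableOn (Eint ε v) Ω)
    (hJQuv : IntegrableOn (JQint ε k u v) Ω) (hJQvv : IntegrableOn (JQint ε k v v) Ω)
    (hub : ∀ᵐ x ∂(volume.restrict Ω), |u x| ≤ 1)
    (hvb : ∀ᵐ x ∂(volume.restrict Ω), |v x| ≤ 1)
    (hmin : ∀ w : EuclideanSpace ℝ (Fin d) → ℝ, Differentiable ℝ w →
      (∀ᵐ x ∂(volume.restrict Ω), |w x| ≤ 1) → IntegrableOn (JQint ε k w v) Ω →
      JQ Ω ε k u v ≤ JQ Ω ε k w v) :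
    E Ω ε u ≤ E Ω ε v := by
  have h1 : E Ω ε u ≤ JQ Ω ε k u v := by
    apply integral_mono_ae hEu hJQuv
    filter_upwards [hub, hvb] with x hux hvx
    have h1 : (u x)^2 ≤ 1 := by nlinarith [abs_nonneg (u x), sq_abs (u x)]
    have hεp : (0:ℝ) < 1/ε^2 := by positivity
    have hkp : (0:ℝ) ≤ (1/(2*k)) * (u x - v x)^2 := by positivity
    simp only [Eint, JQint, pL]
    nlinarith [sq_nonneg (u x - v x), sq_nonneg ((u x)^2 - 1 + (u x - v x)^2),
      mul_le_mul_of_nonneg_left (sq_nonneg (u x - v x)) hεp.le]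
  have h2 : JQ Ω ε k v v = E Ω ε v := by
    unfold JQ E
    apply setIntegral_congr_fun hΩ
    intro x _
    simp only [JQint, Eint, pL]
    ring
  calc E Ω ε u ≤ JQ Ω ε k u v := h1
    _ ≤ JQ Ω ε k v v := hmin v hv hvb hJQvv
    _ = E Ω ε v := h2
end

section
/- Let Ω ⊆ ℝ^d be measurable, ε > 0, and let u, v : ℝ^d → ℝ be differentiable functions such that the integrands defining E(u) and E_Q(u;v) are integrable on Ω. If |u| ≤ 1 almost everywhere on Ω, then E(u) ≤ E_Q(u;v). -/
open MeasureTheory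

/-- if `|u| ≤ 1` a.e. on `Ω`, then `E(u) ≤ E_Q(u;v)`. -/
theorem E_le_EQ {d : ℕ} (Ω : Set (EuclideanSpace ℝ (Fin d))) (hΩ : MeasurableSet Ω)
    (ε : ℝ) (hε : 0 < ε) (u v : EuclideanSpace ℝ (Fin d) → ℝ)
    (hu : Differentiable ℝ u) (hv : Differentiable ℝ v)
    (hEu : IntegrableOn (Eint ε u) Ω) (hEQuv : IntegrableOn (EQint ε u v) Ω)
    (hub : ∀ᵐ x ∂(volume.restrict Ω), |u x| ≤ 1) :
    E Ω ε u ≤ EQ Ω ε u v := by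
  refine integral_mono_ae hEu hEQuv ?_
  filter_upwards [hub] with x hx
  have hs : u x ^ 2 ≤ 1 := by nlinarith [abs_nonneg (u x), sq_abs (u x)]
  have hpos : 0 < 1 / ε ^ 2 := by positivity
  unfold Eint EQint pL
  have key : (1/4) * (u x ^ 2 - 1)^2 ≤ (v x * u x - (1/2) * v x ^2 - 1/2)^2 := by
    nlinarith [sq_nonneg (u x - v x), sq_nonneg (u x + v x), sq_nonneg (u x * v x - 1), sq_nonneg (u x * v x + 1)]
  nlinarith [mul_le_mul_of_nonneg_left key hpos.le]
end

section
/- Let Ω ⊆ ℝ^d be measurable, ε > 0, k > 0, and let u, v : ℝ^d → ℝ be differentiable functions such that the integrands defining E(u) and J_Q(u;v) are integrable on Ω. If |u| ≤ 1 almost everywhere on Ω, then J_Q(u;v) − E(u) ≥ (1/(2k))∫_Ω (u(x)−v(x))² dx ≥ 0; in particular E(u) ≤ J_Q(u;v). -/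
open MeasureTheory

/-- if `|u| ≤ 1` a.e. on `Ω`, then
`J_Q(u;v) − E(u) ≥ (1/(2k)) ∫_Ω (u−v)² ≥ 0`; in particular `E(u) ≤ J_Q(u;v)`. -/
theorem E_le_JQ {d : ℕ} (Ω : Set (EuclideanSpace ℝ (Fin d))) (hΩ : MeasurableSet Ω)
    (ε k : ℝ) (hε : 0 < ε) (hk : 0 < k) (u v : EuclideanSpace ℝ (Fin d) → ℝ)
    (hu : Differentiable ℝ u) (hv : Differentiable ℝ v)
    (hEu : IntegrableOn (Eint ε u) Ω) (hJQuv : IntegrableOn (JQint ε k u v) Ω)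
    (hub : ∀ᵐ x ∂(volume.restrict Ω), |u x| ≤ 1) :
    ((1/(2*k)) * ∫ x in Ω, (u x - v x)^2) ≤ JQ Ω ε k u v - E Ω ε u ∧
    0 ≤ ((1/(2*k)) * ∫ x in Ω, (u x - v x)^2) ∧
    E Ω ε u ≤ JQ Ω ε k u v := by
  have hε2 : (0:ℝ) < ε^2 := by positivity
  have hbound : ∀ᵐ x ∂(volume.restrict Ω),
      (1/(2*k)) * (u x - v x)^2 ≤ JQint ε k u v x - Eint ε u x := by
    filter_upwards [hub] with x hx
    have h1 : (u x)^2 ≤ 1 := by nlinarith [abs_nonneg (u x), sq_abs (u x)]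
    have key : (1/4) * ((u x)^2-1)^2 ≤ (pL (u x) (v x))^2 := by
      unfold pL
      nlinarith [sq_nonneg (u x - v x), sq_nonneg (u x * v x - 1)]
    have h2 : (1/ε^2) * ((1/4) * ((u x)^2-1)^2) ≤ (1/ε^2) * (pL (u x) (v x))^2 :=
      mul_le_mul_of_nonneg_left key (by positivity)
    simp only [JQint, Eint]
    linarith
  have hgint : IntegrableOn (fun x => JQint ε k u v x - Eint ε u x) Ω := hJQuv.sub hEu
  have hmeas : AEStronglyMeasurable (fun x => (u x - v x)^2) (volume.restrict Ω) :=
    (((hu.continuous.sub hv.continuous).pow 2).aestronglyMeasurable)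
  have hsqint : IntegrableOn (fun x => (u x - v x)^2) Ω := by
    apply Integrable.mono' (hgint.const_mul (2*k)) hmeas
    filter_upwards [hbound] with x hx
    rw [Real.norm_eq_abs, abs_of_nonneg (sq_nonneg _)]
    have h2k : (0:ℝ) < 2*k := by linarith
    calc (u x - v x)^2 = (2*k) * ((1/(2*k)) * (u x - v x)^2) := by
          field_simp
      _ ≤ (2*k) * (JQint ε k u v x - Eint ε u x) :=
          mul_le_mul_of_nonneg_left hx (le_of_lt h2k)
  have hconst : IntegrableOn (fun x => (1/(2*k)) * (u x - v x)^2) Ω :=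
    hsqint.const_mul _
  have hmono : ∫ x in Ω, (1/(2*k)) * (u x - v x)^2
      ≤ ∫ x in Ω, (JQint ε k u v x - Eint ε u x) :=
    integral_mono_ae hconst hgint hbound
  have heq1 : ∫ x in Ω, (1/(2*k)) * (u x - v x)^2
      = (1/(2*k)) * ∫ x in Ω, (u x - v x)^2 := MeasureTheory.integral_const_mul _ _
  have heq2 : ∫ x in Ω, (JQint ε k u v x - Eint ε u x)
      = JQ Ω ε k u v - E Ω ε u := integral_sub hJQuv hEu
  have h0 : 0 ≤ (1/(2*k)) * ∫ x in Ω, (u x - v x)^2 := by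
    have : 0 ≤ ∫ x in Ω, (u x - v x)^2 :=
      integral_nonneg fun x => sq_nonneg _
    positivity
  have hmain : (1/(2*k)) * ∫ x in Ω, (u x - v x)^2 ≤ JQ Ω ε k u v - E Ω ε u := by
    rw [← heq1, ← heq2]; exact hmono
  exact ⟨hmain, h0, by linarith⟩
end

section
/- Let Ω ⊆ ℝ^d be measurable, ε > 0, k > 0, and let v : ℝ^d → ℝ be given. Suppose u₁ and u₂ are differentiable functions with integrable J_Q-integrands, |u₁| ≤ 1 and |u₂| ≤ 1 a.e. on Ω, and both minimize J_Q(·;v) over K (i.e. J_Q(u_i;v) ≤ J_Q(w;v) for every differentiable w with |w| ≤ 1 a.e. on Ω and integrable integrand, for i = 1,2; in particular J_Q((u₁+u₂)/2; v) ≥ J_Q(u_i;v)). Then u₁ = u₂ almost everywhere on Ω. -/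
open MeasureTheory

/-!
The integrand of `J_Q(·;v)` is convex in `u`: the gradient term because the norm is, the
`p_L` term because `p_L(·;t)` is affine, and the fidelity term strictly, with midpoint defect
`(u₁ - u₂)² / (8k)`. The midpoint of two minimizers lies in `K`, so its energy is at least the
average of theirs; hence the nonnegative pointwise defect has integral `≤ 0`, vanishes a.e., and
`u₁ = u₂` a.e.
-/

theorem sq_add_div_two_le (a b : ℝ) : ((a + b) / 2) ^ 2 ≤ (a ^ 2 + b ^ 2) / 2 := by
  nlinarith [sq_nonneg (a - b)]

theorem pL_add_div_two (a b t : ℝ) : pL ((a + b) / 2) t = (pL a t + pL b t) / 2 := by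
  unfold pL; ring

section Gradient

variable {F : Type*} [NormedAddCommGroup F] [InnerProductSpace ℝ F] [CompleteSpace F]

theorem norm_gradient_eq_norm_fderiv (f : F → ℝ) (x : F) : ‖gradient f x‖ = ‖fderiv ℝ f x‖ := by
  rw [← toDual_gradient, LinearIsometryEquiv.norm_map]

theorem sq_norm_gradient_add_div_two_le {f g : F → ℝ} {x : F}
    (hf : DifferentiableAt ℝ f x) (hg : DifferentiableAt ℝ g x) :
    ‖gradient (fun y => (f y + g y) / 2) x‖ ^ 2
      ≤ (‖gradient f x‖ ^ 2 + ‖gradient g x‖ ^ 2) / 2 := by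
  have hderiv :
      fderiv ℝ (fun y => (f y + g y) / 2) x = (2⁻¹ : ℝ) • (fderiv ℝ f x + fderiv ℝ g x) := by
    simp only [div_eq_mul_inv]
    exact ((hf.hasFDerivAt.add hg.hasFDerivAt).mul_const _).fderiv
  have hnorm :
      ‖gradient (fun y => (f y + g y) / 2) x‖ ≤ (‖gradient f x‖ + ‖gradient g x‖) / 2 := by
    simp only [norm_gradient_eq_norm_fderiv, hderiv, norm_smul, norm_inv, RCLike.norm_ofNat]
    linarith [norm_add_le (fderiv ℝ f x) (fderiv ℝ g x)]
  calc ‖gradient (fun y => (f y + g y) / 2) x‖ ^ 2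
      ≤ ((‖gradient f x‖ + ‖gradient g x‖) / 2) ^ 2 := by gcongr
    _ ≤ (‖gradient f x‖ ^ 2 + ‖gradient g x‖ ^ 2) / 2 := sq_add_div_two_le _ _

end Gradient

theorem JQint_add_div_two_add_le {d : ℕ} (ε k : ℝ) (v : EuclideanSpace ℝ (Fin d) → ℝ)
    {u₁ u₂ : EuclideanSpace ℝ (Fin d) → ℝ} {x : EuclideanSpace ℝ (Fin d)}
    (h₁ : DifferentiableAt ℝ u₁ x) (h₂ : DifferentiableAt ℝ u₂ x) :
    JQint ε k (fun y => (u₁ y + u₂ y) / 2) v x + (1 / (8 * k)) * (u₁ x - u₂ x) ^ 2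
      ≤ (JQint ε k u₁ v x + JQint ε k u₂ v x) / 2 := by
  have hgrad := sq_norm_gradient_add_div_two_le h₁ h₂
  have hpL := mul_le_mul_of_nonneg_left (sq_add_div_two_le (pL (u₁ x) (v x)) (pL (u₂ x) (v x)))
    (by positivity : (0 : ℝ) ≤ 1 / ε ^ 2)
  unfold JQint
  rw [pL_add_div_two]
  have hfid : (1 / (2 * k)) * ((u₁ x + u₂ x) / 2 - v x) ^ 2 + (1 / (8 * k)) * (u₁ x - u₂ x) ^ 2
      = ((1 / (2 * k)) * (u₁ x - v x) ^ 2 + (1 / (2 * k)) * (u₂ x - v x) ^ 2) / 2 := by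
    ring
  linarith

theorem MeasureTheory.ae_eq_of_ae_le_of_integral_le {α : Type*} [MeasurableSpace α]
    {μ : Measure α} {f g : α → ℝ} (hf : Integrable f μ) (hg : Integrable g μ)
    (hfg : f ≤ᵐ[μ] g) (hgf : ∫ a, g a ∂μ ≤ ∫ a, f a ∂μ) : f =ᵐ[μ] g :=
  (integral_eq_iff_of_ae_le hf hg hfg).mp (le_antisymm (integral_mono_ae hf hg hfg) hgf)

theorem JQ_minimizer_unique_general {d : ℕ} (Ω : Set (EuclideanSpace ℝ (Fin d)))
    (ε k : ℝ) (hk : 0 < k)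
    (v u₁ u₂ : EuclideanSpace ℝ (Fin d) → ℝ)
    (hu₁ : Differentiable ℝ u₁) (hu₂ : Differentiable ℝ u₂)
    (hJQ₁ : IntegrableOn (JQint ε k u₁ v) Ω) (hJQ₂ : IntegrableOn (JQint ε k u₂ v) Ω)
    (hb₁ : ∀ᵐ x ∂(volume.restrict Ω), |u₁ x| ≤ 1)
    (hb₂ : ∀ᵐ x ∂(volume.restrict Ω), |u₂ x| ≤ 1)
    (hmin₁ : ∀ w : EuclideanSpace ℝ (Fin d) → ℝ, Differentiable ℝ w →
      (∀ᵐ x ∂(volume.restrict Ω), |w x| ≤ 1) → IntegrableOn (JQint ε k w v) Ω →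
      JQ Ω ε k u₁ v ≤ JQ Ω ε k w v)
    (hmin₂ : ∀ w : EuclideanSpace ℝ (Fin d) → ℝ, Differentiable ℝ w →
      (∀ᵐ x ∂(volume.restrict Ω), |w x| ≤ 1) → IntegrableOn (JQint ε k w v) Ω →
      JQ Ω ε k u₂ v ≤ JQ Ω ε k w v)
    (hmid : IntegrableOn (JQint ε k (fun x => (u₁ x + u₂ x) / 2) v) Ω) :
    ∀ᵐ x ∂(volume.restrict Ω), u₁ x = u₂ x := by
  set w : EuclideanSpace ℝ (Fin d) → ℝ := fun x => (u₁ x + u₂ x) / 2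
  have hw : Differentiable ℝ w := by fun_prop
  have hwb : ∀ᵐ x ∂(volume.restrict Ω), |w x| ≤ 1 := by
    filter_upwards [hb₁, hb₂] with x h₁ h₂
    show |(u₁ x + u₂ x) / 2| ≤ 1
    rw [abs_le] at h₁ h₂ ⊢
    constructor <;> linarith [h₁.1, h₁.2, h₂.1, h₂.2]
  have havg : IntegrableOn (fun x => (JQint ε k u₁ v x + JQint ε k u₂ v x) / 2) Ω :=
    (hJQ₁.add hJQ₂).div_const 2
  have hint :
      ∫ x in Ω, (JQint ε k u₁ v x + JQint ε k u₂ v x) / 2 ≤ ∫ x in Ω, JQint ε k w v x := by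
    have h₁ := hmin₁ w hw hwb hmid
    have h₂ := hmin₂ w hw hwb hmid
    unfold JQ at h₁ h₂
    rw [integral_div, integral_add hJQ₁ hJQ₂]
    linarith
  have hle x := JQint_add_div_two_add_le ε k v (hu₁ x) (hu₂ x)
  have heq := ae_eq_of_ae_le_of_integral_le hmid havg
    (.of_forall fun x => le_of_add_le_of_nonneg_left (hle x) (by positivity)) hint
  filter_upwards [heq] with x hx
  have hdefect : (1 / (8 * k)) * (u₁ x - u₂ x) ^ 2 ≤ 0 := by linarith [hle x]
  have hpos : 0 < 1 / (8 * k) := by positivity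
  have hsq : (u₁ x - u₂ x) ^ 2 = 0 :=
    le_antisymm (nonpos_of_mul_nonpos_right hdefect hpos) (sq_nonneg _)
  exact sub_eq_zero.mp (pow_eq_zero_iff two_ne_zero |>.mp hsq)

/-- uniqueness of the constrained minimizer of `J_Q(·;v)`: if `u₁`
and `u₂` both minimize `J_Q(·;v)` over `K = {w : |w| ≤ 1 a.e. on Ω}` (in
particular `J_Q((u₁+u₂)/2;v) ≥ J_Q(u_i;v)`), then `u₁ = u₂` a.e. on `Ω`. -/
theorem JQ_minimizer_unique {d : ℕ} (Ω : Set (EuclideanSpace ℝ (Fin d)))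
    (hΩ : MeasurableSet Ω) (ε k : ℝ) (hε : 0 < ε) (hk : 0 < k)
    (v u₁ u₂ : EuclideanSpace ℝ (Fin d) → ℝ)
    (hu₁ : Differentiable ℝ u₁) (hu₂ : Differentiable ℝ u₂)
    (hJQ₁ : IntegrableOn (JQint ε k u₁ v) Ω) (hJQ₂ : IntegrableOn (JQint ε k u₂ v) Ω)
    (hb₁ : ∀ᵐ x ∂(volume.restrict Ω), |u₁ x| ≤ 1)
    (hb₂ : ∀ᵐ x ∂(volume.restrict Ω), |u₂ x| ≤ 1)
    (hmin₁ : ∀ w : EuclideanSpace ℝ (Fin d) → ℝ, Differentiable ℝ w →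
      (∀ᵐ x ∂(volume.restrict Ω), |w x| ≤ 1) → IntegrableOn (JQint ε k w v) Ω →
      JQ Ω ε k u₁ v ≤ JQ Ω ε k w v)
    (hmin₂ : ∀ w : EuclideanSpace ℝ (Fin d) → ℝ, Differentiable ℝ w →
      (∀ᵐ x ∂(volume.restrict Ω), |w x| ≤ 1) → IntegrableOn (JQint ε k w v) Ω →
      JQ Ω ε k u₂ v ≤ JQ Ω ε k w v)
    (hmid : IntegrableOn (JQint ε k (fun x => (u₁ x + u₂ x) / 2) v) Ω) :
    ∀ᵐ x ∂(volume.restrict Ω), u₁ x = u₂ x :=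
  JQ_minimizer_unique_general Ω ε k hk v u₁ u₂ hu₁ hu₂ hJQ₁ hJQ₂ hb₁ hb₂ hmin₁ hmin₂ hmid
end

section
/- Let Ω ⊆ ℝ^d be measurable, ε > 0, k > 0, and let u, v, w : ℝ^d → ℝ be differentiable with all the integrands below integrable on Ω. Suppose u is an unconstrained minimizer of J_Q(·;v) along the direction w, in the sense that J_Q(u + t·w; v) ≥ J_Q(u;v) for every real t. Then the first variation vanishes: ∫_Ω ( ⟨∇u(x), ∇w(x)⟩ + (1/k)(u(x)−v(x))·w(x) + (1/ε²)( 2 v(x)² u(x) − v(x)³ − v(x) )·w(x) ) dx = 0; this is the weak form of the first-order IEQ scheme (u^n − u^{n−1})/k = Δu^n − (2/ε²)(u^{n−1})² u^n + (1/ε²)(u^{n−1})³ + (1/ε²)u^{n−1}. -/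
open MeasureTheory

open scoped RealInnerProductSpace

/-! Along the line `u + t • w` the functional `J_Q(·;v)` is a quadratic polynomial in `t`, because
`p_L(·;v)` is affine; its linear coefficient is the first variation. A real quadratic `t ↦ c + b t + a t²`
that is minimal at `t = 0` has `b = 0` (its discriminant `b²` is nonpositive). -/

theorem eq_zero_of_forall_nonneg_mul_add_sq {K : Type*} [Field K] [LinearOrder K]
    [IsStrictOrderedRing K] {a b : K} (h : ∀ t : K, 0 ≤ t * b + t ^ 2 * a) : b = 0 := by
  have hdiscrim : discrim a b 0 ≤ 0 := discrim_le_zero fun t => by linear_combination h t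
  rw [discrim, mul_zero, sub_zero] at hdiscrim
  exact pow_eq_zero_iff two_ne_zero |>.mp (le_antisymm hdiscrim (sq_nonneg b))

section QuadraticFamily

variable {α : Type*} [MeasurableSpace α] {μ : Measure α} {F : ℝ → α → ℝ} {f g h : α → ℝ}

theorem integral_eq_add_mul_add_sq_of_forall_integrable
    (hF : ∀ t x, F t x = f x + t * g x + t ^ 2 * h x) (hint : ∀ t, Integrable (F t) μ) (t : ℝ) :
    ∫ x, F t x ∂μ = ∫ x, f x ∂μ + t * ∫ x, g x ∂μ + t ^ 2 * ∫ x, h x ∂μ := by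
  -- the coefficients are recovered from the values at `t = 0, 1, -1`
  have hf : Integrable f μ := (hint 0).congr (ae_of_all _ fun x => by simp [hF])
  have hg : Integrable g μ := (((hint 1).sub (hint (-1))).div_const 2).congr
    (ae_of_all _ fun x => by simp only [Pi.sub_apply, hF]; ring)
  have hh : Integrable h μ := ((((hint 1).add (hint (-1))).div_const 2).sub (hint 0)).congr
    (ae_of_all _ fun x => by simp only [Pi.add_apply, Pi.sub_apply, hF]; ring)
  simp only [hF]
  have hfg : Integrable (fun x => f x + t * g x) μ := hf.add (hg.const_mul t)
  rw [integral_add hfg (hh.const_mul _), integral_add hf (hg.const_mul t), integral_const_mul,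
    integral_const_mul]

theorem integral_eq_zero_of_forall_integral_le
    (hF : ∀ t x, F t x = f x + t * g x + t ^ 2 * h x) (hint : ∀ t, Integrable (F t) μ)
    (hmin : ∀ t, ∫ x, f x ∂μ ≤ ∫ x, F t x ∂μ) :
    ∫ x, g x ∂μ = 0 :=
  eq_zero_of_forall_nonneg_mul_add_sq (a := ∫ x, h x ∂μ) fun t => by
    linarith [hmin t, integral_eq_add_mul_add_sq_of_forall_integrable hF hint t]

end QuadraticFamily

theorem gradient_add_const_mul {E : Type*} [NormedAddCommGroup E] [InnerProductSpace ℝ E]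
    [CompleteSpace E] {u w : E → ℝ} {x : E} (hu : DifferentiableAt ℝ u x)
    (hw : DifferentiableAt ℝ w x) (t : ℝ) :
    gradient (fun y => u y + t * w y) x = gradient u x + t • gradient w x := by
  rw [gradient, fderiv_fun_add hu (hw.const_mul t), fderiv_const_mul hw, map_add, map_smul]
  rfl

theorem JQint_add_mul {d : ℕ} (ε k : ℝ) (u v w : EuclideanSpace ℝ (Fin d) → ℝ)
    (hu : Differentiable ℝ u) (hw : Differentiable ℝ w) (t : ℝ) (x : EuclideanSpace ℝ (Fin d)) :
    JQint ε k (fun y => u y + t * w y) v x =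
      JQint ε k u v x
      + t * (⟪gradient u x, gradient w x⟫ + (1/k) * (u x - v x) * w x
          + (1/ε^2) * (2 * (v x)^2 * u x - (v x)^3 - v x) * w x)
      + t^2 * ((1/2) * ‖gradient w x‖^2 + (1/(2*k)) * (w x)^2 + (1/ε^2) * (v x * w x)^2) := by
  simp only [JQint, pL, gradient_add_const_mul (hu x) (hw x)]
  rw [norm_add_sq_real, real_inner_smul_right, norm_smul, Real.norm_eq_abs, mul_pow, sq_abs]
  ring

theorem JQ_first_variation_zero_general {d : ℕ} (Ω : Set (EuclideanSpace ℝ (Fin d)))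
    (ε k : ℝ)
    (u v w : EuclideanSpace ℝ (Fin d) → ℝ)
    (hu : Differentiable ℝ u) (hw : Differentiable ℝ w)
    (hJQ : ∀ t : ℝ, IntegrableOn (JQint ε k (fun x => u x + t * w x) v) Ω)
    (hmin : ∀ t : ℝ, JQ Ω ε k u v ≤ JQ Ω ε k (fun x => u x + t * w x) v) :
    (∫ x in Ω, (⟪gradient u x, gradient w x⟫
      + (1/k) * (u x - v x) * w x
      + (1/ε^2) * (2 * (v x)^2 * u x - (v x)^3 - v x) * w x)) = 0 :=
  integral_eq_zero_of_forall_integral_le (JQint_add_mul ε k u v w hu hw) hJQ hmin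

/-- vanishing first variation of `J_Q(·;v)`, weak form of the
first-order IEQ scheme: if `J_Q(u + t·w;v) ≥ J_Q(u;v)` for every real `t`, then
`∫_Ω (⟨∇u,∇w⟩ + (1/k)(u−v)w + (1/ε²)(2v²u − v³ − v)w) = 0`. -/
theorem JQ_first_variation_zero {d : ℕ} (Ω : Set (EuclideanSpace ℝ (Fin d)))
    (hΩ : MeasurableSet Ω) (ε k : ℝ) (hε : 0 < ε) (hk : 0 < k)
    (u v w : EuclideanSpace ℝ (Fin d) → ℝ)
    (hu : Differentiable ℝ u) (hv : Differentiable ℝ v) (hw : Differentiable ℝ w)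
    (hJQ : ∀ t : ℝ, IntegrableOn (JQint ε k (fun x => u x + t * w x) v) Ω)
    (hFV : IntegrableOn (fun x => ⟪gradient u x, gradient w x⟫
      + (1/k) * (u x - v x) * w x
      + (1/ε^2) * (2 * (v x)^2 * u x - (v x)^3 - v x) * w x) Ω)
    (hmin : ∀ t : ℝ, JQ Ω ε k u v ≤ JQ Ω ε k (fun x => u x + t * w x) v) :
    (∫ x in Ω, (⟪gradient u x, gradient w x⟫
      + (1/k) * (u x - v x) * w x
      + (1/ε^2) * (2 * (v x)^2 * u x - (v x)^3 - v x) * w x)) = 0 :=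
  JQ_first_variation_zero_general Ω ε k u v w hu hw hJQ hmin
end

section
/- Let Ω ⊆ ℝ^d be a measurable set of finite measure, ε > 0, and k > 0 arbitrary. Let (u_n)_{n≥0} be a sequence of differentiable functions ℝ^d → ℝ such that for every n the integrands of E(u_n) and J_Q(u_n; u_{n−1}) are integrable on Ω, |u_n| ≤ 1 a.e. on Ω, and for every n ≥ 1, u_n minimizes J_Q(·; u_{n−1}) over K (i.e. J_Q(u_n; u_{n−1}) ≤ J_Q(w; u_{n−1}) for every differentiable w with |w| ≤ 1 a.e. on Ω and integrable integrand). Then E(u_n) ≤ E(u_{n−1}) for all n ≥ 1; i.e. the constrained IEQ time-stepping scheme dissipates the original double-well energy for every time step size k. -/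
open MeasureTheory

/-- unconditional energy dissipation of the constrained IEQ
time-stepping scheme: for any time step `k > 0`, if each `u_{n+1}` minimizes
`J_Q(·;u_n)` over `K = {w : |w| ≤ 1 a.e. on Ω}`, then `E(u_{n+1}) ≤ E(u_n)` for
all `n`. -/
theorem IEQ_scheme_energy_dissipation {d : ℕ} (Ω : Set (EuclideanSpace ℝ (Fin d)))
    (hΩ : MeasurableSet Ω) (hfin : volume Ω < ⊤)
    (ε k : ℝ) (hε : 0 < ε) (hk : 0 < k) (u : ℕ → EuclideanSpace ℝ (Fin d) → ℝ)
    (hu : ∀ n, Differentiable ℝ (u n))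
    (hE : ∀ n, IntegrableOn (Eint ε (u n)) Ω)
    (hJQ : ∀ n, IntegrableOn (JQint ε k (u (n+1)) (u n)) Ω)
    (hb : ∀ n, ∀ᵐ x ∂(volume.restrict Ω), |u n x| ≤ 1)
    (hmin : ∀ n, ∀ w : EuclideanSpace ℝ (Fin d) → ℝ, Differentiable ℝ w →
      (∀ᵐ x ∂(volume.restrict Ω), |w x| ≤ 1) → IntegrableOn (JQint ε k w (u n)) Ω →
      JQ Ω ε k (u (n+1)) (u n) ≤ JQ Ω ε k w (u n)) :
    ∀ n : ℕ, E Ω ε (u (n+1)) ≤ E Ω ε (u n) := by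
  intro n
  have hfun : JQint ε k (u n) (u n) = Eint ε (u n) := by
    funext x
    simp only [JQint, Eint, pL]
    ring
  have h1 : E Ω ε (u (n+1)) ≤ JQ Ω ε k (u (n+1)) (u n) := by
    refine integral_mono_ae (hE (n+1)) (hJQ n) ?_
    filter_upwards [hb (n+1)] with x hx
    simp only [Eint, JQint, pL]
    have h2k : 0 ≤ (1/(2*k)) * (u (n+1) x - u n x)^2 := by positivity
    have hε2 : 0 < (1:ℝ)/ε^2 := by positivity
    have hsq : (1/4) * ((u (n+1) x)^2 - 1)^2 ≤ (u n x * u (n+1) x - (1/2) * (u n x)^2 - 1/2)^2 := by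
      have h1' : (u (n+1) x)^2 ≤ 1 := by nlinarith [abs_nonneg (u (n+1) x), sq_abs (u (n+1) x)]
      nlinarith [sq_nonneg (u (n+1) x - u n x), sq_nonneg ((u (n+1) x)^2 - 1)]
    nlinarith [mul_le_mul_of_nonneg_left hsq (le_of_lt hε2)]
  have h2 : JQ Ω ε k (u (n+1)) (u n) ≤ JQ Ω ε k (u n) (u n) := by
    refine hmin n (u n) (hu n) (hb n) ?_
    rw [hfun]; exact hE n
  have h3 : JQ Ω ε k (u n) (u n) = E Ω ε (u n) := by
    simp only [JQ, E, hfun]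
  linarith
end
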